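/- Let n be a nonempty finite type, σ : Matrix n n ℂ a positive definite matrix of trace 1, and E : Matrix n n ℂ →ₗ[ℂ] Matrix n n ℂ a linear map satisfying: (i) E ∘ E = E; (ii) ⟨E X, Y⟩_σ = ⟨X, E Y⟩_σ for all X, Y; (iii) E 1 = 1; (iv) Tr[σ * E X] = Tr[σ * X] for all X; (v) σ * E X = E X * σ for all X; (vi) E(X*) = (E X)* for all X. Define Var_σ(Y) := ‖Y − (Tr[σ * Y]) • 1‖_σ² and Var_N(X) := ‖X − E X‖_σ². Then for every Hermitian X: Var_N(X) = Var_σ(X) − Var_σ(E X), and Var_σ(E X) = Re Tr[σ * (E X) * (E X)] − (Re Tr[σ * X])². -/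

import Mathlib

open Matrix
open scoped ComplexOrder

/-- matrix square root via the continuous functional calculus -/
noncomputable def msqrt {n : Type*} [Fintype n] [DecidableEq n] (A : Matrix n n ℂ) :
    Matrix n n ℂ := cfc Real.sqrt A

/-- the KMS inner product associated with a (positive definite) matrix `σ`:
`⟨X, Y⟩_σ = Tr[σ^{1/2} X* σ^{1/2} Y]`. -/
noncomputable def kmsInner {n : Type*} [Fintype n] [DecidableEq n]
    (σ X Y : Matrix n n ℂ) : ℂ :=
  Matrix.trace (msqrt σ * Xᴴ * msqrt σ * Y)

/-- the squared KMS norm `‖X‖_σ² = Re ⟨X, X⟩_σ` -/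
noncomputable def kmsNormSq {n : Type*} [Fintype n] [DecidableEq n]
    (σ X : Matrix n n ℂ) : ℝ := (kmsInner σ X X).re

/-- the variance `Var_σ(Y) = ‖Y − Tr[σY] • 1‖_σ²` -/
noncomputable def varSigma {n : Type*} [Fintype n] [DecidableEq n]
    (σ Y : Matrix n n ℂ) : ℝ :=
  kmsNormSq σ (Y - Matrix.trace (σ * Y) • (1 : Matrix n n ℂ))

/-- the decoherence-free variance `Var_N(X) = ‖X − E X‖_σ²` -/
noncomputable def varDF {n : Type*} [Fintype n] [DecidableEq n]
    (σ : Matrix n n ℂ) (E : Matrix n n ℂ →ₗ[ℂ] Matrix n n ℂ)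
    (X : Matrix n n ℂ) : ℝ :=
  kmsNormSq σ (X - E X)

/-! `E` is an orthogonal projection for the KMS inner product (idempotent and self-adjoint), so
Pythagoras gives `‖X - E X‖² = ‖X‖² - ‖E X‖²`. Since `⟨1, Y⟩_σ = Tr[σ Y]` and `⟨1, 1⟩_σ = Tr σ = 1`,
every variance is `Var_σ(Y) = ‖Y‖² - |Tr[σ Y]|²`, and `E` preserves `Tr[σ ·]`, so the mean terms
cancel. Finally `E X` is Hermitian and commutes with `σ`, hence with `σ^{1/2}`, which turns
`‖E X‖²` into `Tr[σ (E X)²]`. -/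

namespace Matrix

variable {n : Type*} [Fintype n]

lemma star_trace_mul_of_isHermitian {σ X : Matrix n n ℂ} (hσ : σ.IsHermitian)
    (hX : X.IsHermitian) : star (trace (σ * X)) = trace (σ * X) := by
  rw [← trace_conjTranspose, conjTranspose_mul, hX.eq, hσ.eq, trace_mul_comm]

lemma normSq_trace_mul_of_isHermitian {σ X : Matrix n n ℂ} (hσ : σ.IsHermitian)
    (hX : X.IsHermitian) : Complex.normSq (trace (σ * X)) = (trace (σ * X)).re ^ 2 := by
  have him : (trace (σ * X)).im = 0 :=
    Complex.conj_eq_iff_im.mp (star_trace_mul_of_isHermitian hσ hX)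
  rw [Complex.normSq_apply, him, sq]
  ring

end Matrix

section KMS

open Matrix

variable {n : Type*} [Fintype n] [DecidableEq n] (σ : Matrix n n ℂ)

lemma kmsInner_sub_left (X Y Z : Matrix n n ℂ) :
    kmsInner σ (X - Y) Z = kmsInner σ X Z - kmsInner σ Y Z := by
  simp only [kmsInner, conjTranspose_sub, mul_sub, sub_mul, trace_sub]

lemma kmsInner_sub_right (X Y Z : Matrix n n ℂ) :
    kmsInner σ X (Y - Z) = kmsInner σ X Y - kmsInner σ X Z := by
  simp only [kmsInner, mul_sub, trace_sub]

lemma kmsInner_smul_left (c : ℂ) (X Y : Matrix n n ℂ) :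
    kmsInner σ (c • X) Y = star c * kmsInner σ X Y := by
  simp [kmsInner, conjTranspose_smul, trace_smul]

lemma kmsInner_smul_right (c : ℂ) (X Y : Matrix n n ℂ) :
    kmsInner σ X (c • Y) = c * kmsInner σ X Y := by
  simp [kmsInner, trace_smul]

variable {σ}

lemma msqrt_mul_msqrt (hσ : σ.PosSemidef) : msqrt σ * msqrt σ = σ := by
  have hσH : σ.IsHermitian := hσ.1
  rw [msqrt, ← cfc_mul Real.sqrt Real.sqrt σ, cfc_congr (g := id) fun x hx => ?_, cfc_id ℝ σ]
  rw [hσH.spectrum_real_eq_range_eigenvalues] at hx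
  obtain ⟨i, rfl⟩ := hx
  exact Real.mul_self_sqrt (hσ.eigenvalues_nonneg i)

lemma kmsInner_one_left (hσ : σ.PosSemidef) (Y : Matrix n n ℂ) :
    kmsInner σ 1 Y = trace (σ * Y) := by
  rw [kmsInner, conjTranspose_one, mul_one, msqrt_mul_msqrt hσ]

lemma kmsInner_one_right (hσ : σ.PosSemidef) (X : Matrix n n ℂ) :
    kmsInner σ X 1 = star (trace (σ * X)) := by
  rw [kmsInner, mul_one, trace_mul_comm, ← mul_assoc, msqrt_mul_msqrt hσ, ← trace_conjTranspose,
    conjTranspose_mul, hσ.1.eq, trace_mul_comm]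

lemma kmsInner_self_of_commute (hσ : σ.PosSemidef) {Y : Matrix n n ℂ} (hY : Y.IsHermitian)
    (hYσ : Commute σ Y) : kmsInner σ Y Y = trace (σ * Y * Y) := by
  have hY_sqrt : msqrt σ * Y = Y * msqrt σ := hYσ.cfc_real Real.sqrt
  rw [kmsInner, hY.eq, mul_assoc (msqrt σ), ← hY_sqrt, ← mul_assoc, msqrt_mul_msqrt hσ]

lemma varSigma_eq_kmsNormSq_sub_normSq (hσ : σ.PosSemidef) (hσtr : trace σ = 1)
    (Y : Matrix n n ℂ) :
    varSigma σ Y = kmsNormSq σ Y - Complex.normSq (trace (σ * Y)) := by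
  set u := trace (σ * Y)
  have h11 : kmsInner σ 1 1 = 1 := by rw [kmsInner_one_left hσ, mul_one, hσtr]
  have hexpand : kmsInner σ (Y - u • 1) (Y - u • 1) = kmsInner σ Y Y - Complex.normSq u := by
    simp only [kmsInner_sub_left, kmsInner_sub_right, kmsInner_smul_left, kmsInner_smul_right]
    rw [kmsInner_one_left hσ, kmsInner_one_right hσ, h11, Complex.normSq_eq_conj_mul_self,
      ← Complex.star_def]
    ring
  rw [varSigma, kmsNormSq, hexpand, kmsNormSq, Complex.sub_re, Complex.ofReal_re]

lemma kmsNormSq_sub_apply_of_idempotent_of_symmetric (E : Matrix n n ℂ → Matrix n n ℂ)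
    (hidem : ∀ X, E (E X) = E X) (hsymm : ∀ X Y, kmsInner σ (E X) Y = kmsInner σ X (E Y))
    (X : Matrix n n ℂ) : kmsNormSq σ (X - E X) = kmsNormSq σ X - kmsNormSq σ (E X) := by
  have hEE : kmsInner σ (E X) (E X) = kmsInner σ X (E X) := by rw [hsymm, hidem]
  have hEX : kmsInner σ (E X) X = kmsInner σ X (E X) := hsymm X X
  simp only [kmsNormSq, kmsInner_sub_left, kmsInner_sub_right, hEX, hEE, Complex.sub_re]
  ring

end KMS

theorem varDF_eq_varSigma_sub
    {n : Type*} [Fintype n] [DecidableEq n]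
    (σ : Matrix n n ℂ) (hσ : σ.PosDef) (hσtr : Matrix.trace σ = 1)
    (E : Matrix n n ℂ →ₗ[ℂ] Matrix n n ℂ)
    (hE1 : ∀ X, E (E X) = E X)
    (hE2 : ∀ X Y, kmsInner σ (E X) Y = kmsInner σ X (E Y))
    (hE4 : ∀ X, Matrix.trace (σ * E X) = Matrix.trace (σ * X))
    (hE5 : ∀ X, σ * E X = E X * σ)
    (hE6 : ∀ X, E Xᴴ = (E X)ᴴ)
    (X : Matrix n n ℂ) (hX : X.IsHermitian) :
    varDF σ E X = varSigma σ X - varSigma σ (E X) ∧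
      varSigma σ (E X) =
        (Matrix.trace (σ * E X * E X)).re - ((Matrix.trace (σ * X)).re) ^ 2 := by
  have hvar := varSigma_eq_kmsNormSq_sub_normSq hσ.posSemidef hσtr
  have hEX : (E X).IsHermitian := by rw [Matrix.IsHermitian, ← hE6, hX.eq]
  refine ⟨?_, ?_⟩
  · rw [varDF, kmsNormSq_sub_apply_of_idempotent_of_symmetric E hE1 hE2, hvar, hvar, hE4]
    ring
  · rw [hvar, kmsNormSq, kmsInner_self_of_commute hσ.posSemidef hEX (hE5 X), hE4,
      Matrix.normSq_trace_mul_of_isHermitian hσ.1 hX]
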